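/- For each generator σ_i of B_n, the eigenvalues of the Lawrence–Krammer matrix ρ_n(σ_i) (with multiplicity) are: −tq² with multiplicity 1, −q with multiplicity n−2, and 1 with multiplicity (n−1)(n−2)/2. -/

import Mathlib

open Polynomial

/-- Index set `{(j,k) : 1 ≤ j < k ≤ n}` for the basis `v_{j,k}` of the Lawrence–Krammer
representation space `ℂ^{n(n-1)/2}`. -/
def LKIdx (n : ℕ) := {p : Fin (n + 1) × Fin (n + 1) // 1 ≤ (p.1 : ℕ) ∧ (p.1 : ℕ) < (p.2 : ℕ)}

instance (n : ℕ) : Fintype (LKIdx n) := Subtype.fintype _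
instance (n : ℕ) : DecidableEq (LKIdx n) := Subtype.instDecidableEq

/-- The matrix of `ρ_n(σᵢ)` for the Lawrence–Krammer representation, in the basis
`{v_{j,k} : 1 ≤ j < k ≤ n}`: the entry at row `(a,b)`, column `(j,k)` is the coefficient
of `v_{a,b}` in `ρ_n(σᵢ) v_{j,k}`, following the standard formulas:
`ρ_n(σᵢ) v_{j,k} = v_{j,k}` if `i ∉ {j-1, j, k-1, k}`;
`= q v_{i,k} + (q²-q) v_{i,j} + (1-q) v_{j,k}` if `i = j-1`;
`= v_{j+1,k}` if `i = j ≠ k-1`;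
`= q v_{j,i} + (1-q) v_{j,k} - (q²-q) t v_{i,k}` if `i = k-1 ≠ j`;
`= v_{j,k+1}` if `i = k`; and `= -t q² v_{j,k}` if `i = j = k-1`. -/
def LK (n : ℕ) (q t : ℂ) (i : ℕ) : Matrix (LKIdx n) (LKIdx n) ℂ := fun r c =>
  let j : ℕ := (c.1.1 : ℕ); let k : ℕ := (c.1.2 : ℕ)
  let a : ℕ := (r.1.1 : ℕ); let b : ℕ := (r.1.2 : ℕ)
  if i = j - 1 then
    (if (a, b) = (i, k) then q else 0) + (if (a, b) = (i, j) then q ^ 2 - q else 0) +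
      (if (a, b) = (j, k) then 1 - q else 0)
  else if i = j ∧ i = k - 1 then (if (a, b) = (j, k) then -t * q ^ 2 else 0)
  else if i = j then (if (a, b) = (j + 1, k) then 1 else 0)
  else if i = k - 1 then
    (if (a, b) = (j, i) then q else 0) + (if (a, b) = (j, k) then 1 - q else 0) +
      (if (a, b) = (i, k) then -(q ^ 2 - q) * t else 0)
  else if i = k then (if (a, b) = (j, k + 1) then 1 else 0)
  else (if (a, b) = (j, k) then 1 else 0)

/-! `ρ_n(σᵢ)` moves `v_{j,k}` essentially along the transposition `(i i+1)` of the indices. Grouping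
the basis by the orbits of this transposition on pairs `{j,k}` and putting the fixed pair `{i,i+1}`
first makes the matrix block upper triangular. The blocks are `(-tq²)` for `{i,i+1}`; the
`2 × 2` matrix `[[0, q], [1, 1-q]]`, with eigenvalues `1` and `-q`, for each of the `n-2` orbits
`{v_{i,k}, v_{i+1,k}}` or `{v_{j,i}, v_{j,i+1}}`; and `(1)` for every pair disjoint from
`{i,i+1}`. Counting the representatives avoiding `i+1` gives `C(n-1, 2)` factors `X - 1`. -/

open Finset

namespace Matrix

variable {m α R : Type*} [Fintype m] [DecidableEq m] [DecidableEq α] [CommRing R]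

lemma charpoly_toSquareBlock_of_fiber_eq_singleton (M : Matrix m m R) (b : m → α) (x : m)
    (hb : ∀ z, b z = b x ↔ z = x) :
    (M.toSquareBlock b (b x)).charpoly = X - C (M x x) := by
  let _ : Unique {z // b z = b x} :=
    { default := ⟨x, rfl⟩, uniq := fun z => Subtype.ext ((hb z).1 z.2) }
  rw [charpoly, det_unique, charmatrix_apply_eq]
  rfl

lemma charpoly_toSquareBlock_of_fiber_eq_pair (M : Matrix m m R) (b : m → α) {x y : m}
    (hxy : x ≠ y) (hb : ∀ z, b z = b x ↔ z = x ∨ z = y) :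
    (M.toSquareBlock b (b x)).charpoly =
      (X - C (M x x)) * (X - C (M y y)) - C (M x y * M y x) := by
  have hy : b y = b x := (hb y).2 (Or.inr rfl)
  let e : Fin 2 ≃ {z // b z = b x} := Equiv.ofBijective ![⟨x, rfl⟩, ⟨y, hy⟩] <| by
    refine ⟨fun u v huv => ?_, fun z => ?_⟩
    · fin_cases u <;> fin_cases v <;> simp_all [Subtype.ext_iff, eq_comm]
    · rcases (hb z).1 z.2 with h | h
      · exact ⟨0, Subtype.ext h.symm⟩
      · exact ⟨1, Subtype.ext h.symm⟩
  have he0 : (e 0 : m) = x := rfl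
  have he1 : (e 1 : m) = y := rfl
  rw [charpoly, ← det_submatrix_equiv_self e, det_fin_two]
  have h01 : e 0 ≠ e 1 := e.injective.ne Fin.zero_ne_one
  simp only [submatrix_apply, charmatrix_apply_eq, charmatrix_apply_ne _ _ _ h01,
    charmatrix_apply_ne _ _ _ h01.symm, toSquareBlock_def, of_apply, he0, he1, map_mul]
  ring

end Matrix

namespace LKIdx

variable {n : ℕ}

lemma bounds (p : LKIdx n) : 1 ≤ (p.1.1 : ℕ) ∧ (p.1.1 : ℕ) < p.1.2 ∧ (p.1.2 : ℕ) ≤ n :=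
  ⟨p.2.1, p.2.2, Nat.lt_succ_iff.mp p.1.2.isLt⟩

def mk (a b : ℕ) (ha : 1 ≤ a) (hab : a < b) (hb : b ≤ n) : LKIdx n :=
  ⟨(⟨a, by omega⟩, ⟨b, by omega⟩), ha, hab⟩

@[simp] lemma mk_fst (a b : ℕ) (ha hab hb) : ((mk a b ha hab hb : LKIdx n).1.1 : ℕ) = a := rfl
@[simp] lemma mk_snd (a b : ℕ) (ha hab hb) : ((mk a b ha hab hb : LKIdx n).1.2 : ℕ) = b := rfl

lemma ext_iff {p r : LKIdx n} :
    p = r ↔ (p.1.1 : ℕ) = r.1.1 ∧ (p.1.2 : ℕ) = r.1.2 := by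
  refine ⟨fun h => h ▸ ⟨rfl, rfl⟩, fun h => ?_⟩
  exact Subtype.ext (Prod.ext (Fin.ext h.1) (Fin.ext h.2))

lemma card_filter_fst_and_snd (P : ℕ → Prop) [DecidablePred P] :
    #{p : LKIdx n | P p.1.1 ∧ P p.1.2} = (#{a ∈ Icc 1 n | P a}).choose 2 := by
  rw [← card_product_filter_lt]
  refine card_bij (fun p _ => ((p.1.1 : ℕ), (p.1.2 : ℕ))) ?_ ?_ ?_
  · intro p hp
    obtain ⟨h1, h2, h3⟩ := bounds p
    simp only [mem_filter, mem_univ, true_and, mem_product, mem_Icc] at hp ⊢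
    exact ⟨⟨⟨⟨h1, by omega⟩, hp.1⟩, ⟨⟨by omega, h3⟩, hp.2⟩⟩, h2⟩
  · intro p _ r _ h
    simpa [ext_iff] using h
  · rintro ⟨a, b⟩ h
    simp only [mem_filter, mem_product, mem_Icc] at h
    exact ⟨mk a b (by omega) h.2 (by omega), by simp [h.1.1.2, h.1.2.2], rfl⟩

end LKIdx

-- `Equiv.swap i (i + 1) a` by cases, in a form `omega` can use.
lemma swap_succ_cases (i a : ℕ) :
    a = i ∧ Equiv.swap i (i + 1) a = i + 1 ∨ a = i + 1 ∧ Equiv.swap i (i + 1) a = i ∨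
      a ≠ i ∧ a ≠ i + 1 ∧ Equiv.swap i (i + 1) a = a := by
  rcases eq_or_ne a i with rfl | h
  · simp
  rcases eq_or_ne a (i + 1) with rfl | h'
  · simp
  · simp [h, h', Equiv.swap_apply_of_ne_of_ne]

section LawrenceKrammer

variable {n i : ℕ} {q t : ℂ}

def collapse (i a : ℕ) : ℕ := if a = i + 1 then i else a

/- Pairs in the same orbit of the transposition `(i i+1)` get the same index. The fixed pair
`(i, i+1)` gets the least one: its row holds every entry of `LK` outside the diagonal blocks. -/
def blockIndex (i : ℕ) (p : LKIdx n) : Lex (ℕ × ℕ) :=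
  if (p.1.1 : ℕ) = i ∧ (p.1.2 : ℕ) = i + 1 then toLex (0, 0)
  else toLex (collapse i p.1.1, collapse i p.1.2)

lemma blockIndex_eq_blockIndex_iff {x z : LKIdx n} :
    blockIndex i z = blockIndex i x ↔
      (z.1.1 : ℕ) = x.1.1 ∧ (z.1.2 : ℕ) = x.1.2 ∨
      (z.1.1 : ℕ) = Equiv.swap i (i + 1) (x.1.1 : ℕ) ∧
        (z.1.2 : ℕ) = Equiv.swap i (i + 1) (x.1.2 : ℕ) := by
  obtain ⟨hx1, hx2, hx3⟩ := LKIdx.bounds x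
  obtain ⟨hz1, hz2, hz3⟩ := LKIdx.bounds z
  have := swap_succ_cases i x.1.1
  have := swap_succ_cases i x.1.2
  simp only [blockIndex, collapse]
  split_ifs <;> simp only [toLex_inj, Prod.ext_iff, true_and, and_true, true_iff] <;> omega

lemma blockIndex_eq_or_of_LK_apply_ne_zero {r c : LKIdx n} (h : LK n q t i r c ≠ 0) :
    blockIndex i r = blockIndex i c ∨ (r.1.1 : ℕ) = i ∧ (r.1.2 : ℕ) = i + 1 := by
  rw [blockIndex_eq_blockIndex_iff]
  obtain ⟨hr1, hr2, hr3⟩ := LKIdx.bounds r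
  obtain ⟨hc1, hc2, hc3⟩ := LKIdx.bounds c
  have := swap_succ_cases i c.1.1
  have := swap_succ_cases i c.1.2
  simp only [LK] at h
  split_ifs at h <;> simp only [Prod.mk.injEq] at * <;> first | omega | simp at h

lemma LK_blockTriangular : (LK n q t i).BlockTriangular (blockIndex i) := by
  intro r c hlt
  by_contra h
  rcases blockIndex_eq_or_of_LK_apply_ne_zero h with heq | ⟨h1, h2⟩
  · exact hlt.ne heq.symm
  · have hr : blockIndex i r = ⊥ := if_pos ⟨h1, h2⟩
    exact not_lt_bot (hr ▸ hlt)

lemma LK_apply_self (x : LKIdx n) :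
    LK n q t i x x =
      if (x.1.1 : ℕ) = i ∧ (x.1.2 : ℕ) = i + 1 then -t * q ^ 2
      else if (x.1.1 : ℕ) = i ∨ (x.1.2 : ℕ) = i then 0
      else if (x.1.1 : ℕ) = i + 1 ∨ (x.1.2 : ℕ) = i + 1 then 1 - q
      else 1 := by
  obtain ⟨h1, h2, h3⟩ := LKIdx.bounds x
  simp only [LK, Prod.mk.injEq]
  split_ifs <;> first | omega | simp

lemma LK_apply_swap {x y : LKIdx n} (hx : (x.1.1 : ℕ) = i ∨ (x.1.2 : ℕ) = i)
    (hx2 : (x.1.2 : ℕ) ≠ i + 1)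
    (hy1 : (y.1.1 : ℕ) = Equiv.swap i (i + 1) (x.1.1 : ℕ))
    (hy2 : (y.1.2 : ℕ) = Equiv.swap i (i + 1) (x.1.2 : ℕ)) :
    LK n q t i x y = q ∧ LK n q t i y x = 1 := by
  obtain ⟨h1, h2, h3⟩ := LKIdx.bounds x
  obtain ⟨h4, h5, h6⟩ := LKIdx.bounds y
  have := swap_succ_cases i x.1.1
  have := swap_succ_cases i x.1.2
  constructor <;> simp only [LK, Prod.mk.injEq] <;> split_ifs <;> first | omega | simp

lemma charpoly_toSquareBlock_LK_mk_succ (hi : 1 ≤ i) (hin : i < n) :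
    ((LK n q t i).toSquareBlock (blockIndex i)
      (blockIndex i (LKIdx.mk i (i + 1) hi i.lt_succ_self hin))).charpoly =
      X - C (-t * q ^ 2) := by
  rw [Matrix.charpoly_toSquareBlock_of_fiber_eq_singleton, LK_apply_self]
  · simp
  · intro z
    obtain ⟨hz1, hz2, hz3⟩ := LKIdx.bounds z
    simp only [blockIndex_eq_blockIndex_iff, LKIdx.ext_iff, LKIdx.mk_fst, LKIdx.mk_snd,
      Equiv.swap_apply_left, Equiv.swap_apply_right]
    omega

lemma charpoly_toSquareBlock_LK_of_ne_succ (hin : i < n) {x : LKIdx n}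
    (hx1 : (x.1.1 : ℕ) ≠ i + 1) (hx2 : (x.1.2 : ℕ) ≠ i + 1) :
    ((LK n q t i).toSquareBlock (blockIndex i) (blockIndex i x)).charpoly =
      (X - C 1) * (if (x.1.1 : ℕ) = i ∨ (x.1.2 : ℕ) = i then X - C (-q) else 1) := by
  obtain ⟨h1, h2, h3⟩ := LKIdx.bounds x
  have hs1 := swap_succ_cases i x.1.1
  have hs2 := swap_succ_cases i x.1.2
  split_ifs with hx
  · obtain ⟨y, hy1, hy2⟩ : ∃ y : LKIdx n, (y.1.1 : ℕ) = Equiv.swap i (i + 1) (x.1.1 : ℕ) ∧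
        (y.1.2 : ℕ) = Equiv.swap i (i + 1) (x.1.2 : ℕ) :=
      ⟨LKIdx.mk _ _ (by omega) (by omega) (by omega), rfl, rfl⟩
    have hxy : x ≠ y := by
      rw [ne_eq, LKIdx.ext_iff]
      omega
    have hfib : ∀ z, blockIndex i z = blockIndex i x ↔ z = x ∨ z = y := fun z => by
      rw [blockIndex_eq_blockIndex_iff, LKIdx.ext_iff, LKIdx.ext_iff, hy1, hy2]
    obtain ⟨hLxy, hLyx⟩ := LK_apply_swap (q := q) (t := t) hx hx2 hy1 hy2
    have hxx : LK n q t i x x = 0 := by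
      rw [LK_apply_self]
      split_ifs <;> first | rfl | omega
    have hyy : LK n q t i y y = 1 - q := by
      rw [LK_apply_self]
      split_ifs <;> first | rfl | omega
    rw [Matrix.charpoly_toSquareBlock_of_fiber_eq_pair _ _ hxy hfib, hxx, hyy, hLxy, hLyx]
    simp only [map_sub, map_one, map_neg, map_mul, map_zero]
    ring
  · have hxx : LK n q t i x x = 1 := by
      rw [LK_apply_self]
      split_ifs <;> first | rfl | omega
    rw [Matrix.charpoly_toSquareBlock_of_fiber_eq_singleton, hxx, mul_one]
    intro z
    obtain ⟨hz1, hz2, hz3⟩ := LKIdx.bounds z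
    simp only [blockIndex_eq_blockIndex_iff, LKIdx.ext_iff]
    omega

def avoiding (n a : ℕ) : Finset (LKIdx n) := {p | (p.1.1 : ℕ) ≠ a ∧ (p.1.2 : ℕ) ≠ a}

lemma image_blockIndex_univ (hi : 1 ≤ i) (hin : i < n) :
    (univ : Finset (LKIdx n)).image (blockIndex i) =
      (insert (LKIdx.mk i (i + 1) hi i.lt_succ_self hin) (avoiding n (i + 1))).image
        (blockIndex i) := by
  refine (image_subset_iff.2 fun p _ => ?_).antisymm (image_subset_image (subset_univ _))
  obtain ⟨h1, h2, h3⟩ := LKIdx.bounds p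
  have hs1 := swap_succ_cases i p.1.1
  have hs2 := swap_succ_cases i p.1.2
  rw [mem_image]
  by_cases hp0 : (p.1.1 : ℕ) = i ∧ (p.1.2 : ℕ) = i + 1
  · exact ⟨_, mem_insert_self _ _, congrArg _ (LKIdx.ext_iff.2 hp0).symm⟩
  by_cases hp : (p.1.1 : ℕ) ≠ i + 1 ∧ (p.1.2 : ℕ) ≠ i + 1
  · exact ⟨p, mem_insert_of_mem (by simpa [avoiding] using hp), rfl⟩
  refine ⟨LKIdx.mk (Equiv.swap i (i + 1) (p.1.1 : ℕ)) (Equiv.swap i (i + 1) (p.1.2 : ℕ))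
    (by omega) (by omega) (by omega), mem_insert_of_mem ?_,
    (blockIndex_eq_blockIndex_iff).2 (Or.inr ⟨rfl, rfl⟩)⟩
  simp only [avoiding, mem_filter, mem_univ, true_and, LKIdx.mk_fst, LKIdx.mk_snd]
  omega

lemma injOn_blockIndex (hi : 1 ≤ i) (hin : i < n) :
    Set.InjOn (blockIndex i)
      ((insert (LKIdx.mk i (i + 1) hi i.lt_succ_self hin) (avoiding n (i + 1)) :
        Finset (LKIdx n)) : Set (LKIdx n)) := by
  intro p hp r hr h
  obtain ⟨h1, h2, h3⟩ := LKIdx.bounds p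
  obtain ⟨h4, h5, h6⟩ := LKIdx.bounds r
  have hs1 := swap_succ_cases i r.1.1
  have hs2 := swap_succ_cases i r.1.2
  simp only [coe_insert, Set.mem_insert_iff, mem_coe, avoiding, mem_filter, mem_univ, true_and,
    LKIdx.ext_iff, LKIdx.mk_fst, LKIdx.mk_snd] at hp hr
  rw [blockIndex_eq_blockIndex_iff] at h
  rw [LKIdx.ext_iff]
  omega

lemma charpoly_LK_eq_mul_prod (hi : 1 ≤ i) (hin : i < n) :
    (LK n q t i).charpoly = (X - C (-t * q ^ 2)) * ∏ p ∈ avoiding n (i + 1),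
      (X - C 1) * (if (p.1.1 : ℕ) = i ∨ (p.1.2 : ℕ) = i then X - C (-q) else 1) := by
  have hmem : LKIdx.mk i (i + 1) hi i.lt_succ_self hin ∉ avoiding n (i + 1) := by
    simp [avoiding]
  rw [LK_blockTriangular.charpoly, image_blockIndex_univ hi hin,
    prod_image (injOn_blockIndex hi hin), prod_insert hmem,
    charpoly_toSquareBlock_LK_mk_succ hi hin]
  refine congrArg _ (prod_congr rfl fun p hp => ?_)
  simp only [avoiding, mem_filter, mem_univ, true_and] at hp
  exact charpoly_toSquareBlock_LK_of_ne_succ hin hp.1 hp.2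

lemma card_avoiding {a : ℕ} (ha : 1 ≤ a) (han : a ≤ n) :
    #(avoiding n a) = (n - 1).choose 2 := by
  rw [avoiding, LKIdx.card_filter_fst_and_snd (· ≠ a), filter_ne',
    card_erase_of_mem (by simp; omega), Nat.card_Icc, Nat.add_sub_cancel]

lemma card_filter_avoiding_succ (hi : 1 ≤ i) (hin : i < n) :
    #{p ∈ avoiding n (i + 1) | (p.1.1 : ℕ) = i ∨ (p.1.2 : ℕ) = i} = n - 2 := by
  have hsplit := card_filter_add_card_filter_not (s := avoiding n (i + 1))
    (fun p => (p.1.1 : ℕ) = i ∨ (p.1.2 : ℕ) = i)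
  have hIcc : {b ∈ Icc 1 n | b ≠ i + 1 ∧ b ≠ i} = ((Icc 1 n).erase (i + 1)).erase i := by
    ext b
    simp only [mem_filter, mem_Icc, mem_erase]
    omega
  have hrest : #{p ∈ avoiding n (i + 1) | ¬((p.1.1 : ℕ) = i ∨ (p.1.2 : ℕ) = i)} =
      (n - 2).choose 2 := calc
    _ = #{p : LKIdx n | ((p.1.1 : ℕ) ≠ i + 1 ∧ (p.1.1 : ℕ) ≠ i) ∧
          ((p.1.2 : ℕ) ≠ i + 1 ∧ (p.1.2 : ℕ) ≠ i)} := by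
      rw [avoiding, filter_filter]
      congr 1
      ext p
      simp only [mem_filter, mem_univ, true_and]
      omega
    _ = (#{b ∈ Icc 1 n | b ≠ i + 1 ∧ b ≠ i}).choose 2 :=
      LKIdx.card_filter_fst_and_snd (fun b => b ≠ i + 1 ∧ b ≠ i)
    _ = (n - 2).choose 2 := by
      rw [hIcc, card_erase_of_mem (by simp; omega), card_erase_of_mem (by simp; omega),
        Nat.card_Icc, Nat.add_sub_cancel, Nat.sub_sub]
  have hchoose : (n - 1).choose 2 = (n - 2).choose 1 + (n - 2).choose 2 := by
    rw [show n - 1 = n - 2 + 1 by omega]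
    exact Nat.choose_succ_succ' _ _
  rw [card_avoiding (by omega) hin, hrest, hchoose, Nat.choose_one_right] at hsplit
  omega

end LawrenceKrammer

theorem stmt16_general (n : ℕ) (q t : ℂ) (i : ℕ) (hi1 : 1 ≤ i) (hi2 : i ≤ n - 1) :
    (LK n q t i).charpoly =
      (X - C (-t * q ^ 2)) * (X - C (-q)) ^ (n - 2) * (X - C 1) ^ ((n - 1) * (n - 2) / 2) := by
  have hin : i < n := by omega
  rw [charpoly_LK_eq_mul_prod hi1 hin, prod_mul_distrib, prod_const, prod_ite, prod_const,
    prod_const_one, mul_one, card_avoiding (by omega) hin, card_filter_avoiding_succ hi1 hin,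
    Nat.choose_two_right, Nat.sub_sub]
  ring

/-- The eigenvalues (with multiplicity) of the Lawrence–Krammer matrix `ρ_n(σᵢ)` are
`-tq²` (once), `-q` (`n-2` times) and `1` (`(n-1)(n-2)/2` times). -/
theorem stmt16 (n : ℕ) (hn : 2 ≤ n) (q t : ℂ) (hq0 : q ≠ 0) (ht0 : t ≠ 0)
    (hq : ∀ k : ℕ, 0 < k → q ^ k ≠ 1) (ht : ∀ k : ℕ, 0 < k → t ^ k ≠ 1)
    (i : ℕ) (hi1 : 1 ≤ i) (hi2 : i ≤ n - 1) :
    (LK n q t i).charpoly =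
      (X - C (-t * q ^ 2)) * (X - C (-q)) ^ (n - 2) * (X - C 1) ^ ((n - 1) * (n - 2) / 2) :=
  stmt16_general n q t i hi1 hi2
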